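/- Let u : ℝ → ℝ be of class C⁶, fix x ∈ ℝ, and let ν ∈ ℝ. Then the five-point diffusion scheme approximates the cell-averaged diffusion operator to fourth order: −ν·(−u(x−2h) + 28·u(x−h) − 54·u(x) + 28·u(x+h) − u(x+2h))/(24·h²) + (1/h)·∫_{x−h/2}^{x+h/2} ν·u''(ξ) dξ = O(h⁴) as h → 0⁺. -/

import Mathlib

/-!
The cell average of `ν u''` is exactly `ν (u'(x + h/2) - u'(x - h/2)) / h`, so the error is
`ν / (24 h²)` times the defect `fivePointCellDefect u x h`. Expanding `u` around `x` at
`x ± h, x ± 2h` to order six and `u'` at `x ± h/2` to order five, all powers of `h` below `h⁶`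
cancel in the defect, which is therefore `(9/80) u⁽⁶⁾(x) h⁶ + o(h⁶) = O(h⁶)`.
-/

open Asymptotics Filter Set MeasureTheory

open scoped Topology Nat

theorem taylor_isLittleO_comp_add_mul {E : Type*} [NormedAddCommGroup E] [NormedSpace ℝ E]
    {f : ℝ → E} {n : ℕ} (hf : ContDiff ℝ n f) (x c : ℝ) :
    (fun h ↦ f (x + c * h) -
        ∑ k ∈ Finset.range (n + 1), ((k ! : ℝ)⁻¹ * (c * h) ^ k) • iteratedDeriv k f x)
      =o[𝓝 0] fun h ↦ h ^ n := by
  have hφ : Tendsto (fun h : ℝ ↦ x + c * h) (𝓝 0) (𝓝 x) :=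
    (continuous_const.add (continuous_const.mul continuous_id)).tendsto' 0 x (by simp)
  refine ((taylor_isLittleO_univ hf).comp_tendsto hφ |>.trans_isBigO ?_).congr_left fun h ↦ ?_
  · exact (isBigO_const_mul_self (c ^ n) (fun h : ℝ ↦ h ^ n) (𝓝 0)).congr_left
      fun h ↦ by simp [mul_pow]
  · simp [taylor_within_apply, iteratedDerivWithin_univ]

theorem intervalIntegral_iteratedDeriv_two {u : ℝ → ℝ} (hu : ContDiff ℝ 2 u) (a b : ℝ) :
    ∫ ξ in a..b, iteratedDeriv 2 u ξ = deriv u b - deriv u a := by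
  rw [iteratedDeriv_succ, iteratedDeriv_one,
    intervalIntegral.integral_deriv_of_contDiffOn_uIcc (hu.deriv' (n := 1)).contDiffOn]

noncomputable def fivePointCellDefect (u : ℝ → ℝ) (x h : ℝ) : ℝ :=
  u (x - 2 * h) - 28 * u (x - h) + 54 * u x - 28 * u (x + h) + u (x + 2 * h)
    + 24 * h * (deriv u (x + h / 2) - deriv u (x - h / 2))

theorem fivePointCellDefect_isBigO {u : ℝ → ℝ} (hu : ContDiff ℝ 6 u) (x : ℝ) :
    fivePointCellDefect u x =O[𝓝 0] fun h ↦ h ^ 6 := by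
  have htaylor := fun c ↦ taylor_isLittleO_comp_add_mul hu x c
  have hderiv := fun c ↦ ((isBigO_refl (fun h : ℝ ↦ h) (𝓝 0)).mul_isLittleO
    (taylor_isLittleO_comp_add_mul hu.deriv' x c)).congr_right fun h ↦ (pow_succ' h 5).symm
  have hrem := (((((htaylor (-2)).sub ((htaylor (-1)).const_mul_left 28)).sub
    ((htaylor 1).const_mul_left 28)).add (htaylor 2)).add
    (((hderiv (1 / 2)).sub (hderiv (-1 / 2))).const_mul_left 24)).isBigO
  refine (hrem.add (isBigO_const_mul_self (9 / 80 * iteratedDeriv 6 u x) _ _)).congr_left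
    fun h ↦ ?_
  simp only [fivePointCellDefect, Finset.sum_range_succ, Finset.sum_range_zero,
    ← iteratedDeriv_succ', smul_eq_mul, Nat.factorial, iteratedDeriv_zero]
  ring_nf

theorem five_point_cell_average_error_eq {u : ℝ → ℝ} (hu : ContDiff ℝ 2 u) (x ν : ℝ) {h : ℝ}
    (hh : h ≠ 0) :
    -ν * (-u (x - 2 * h) + 28 * u (x - h) - 54 * u x + 28 * u (x + h) - u (x + 2 * h))
          / (24 * h ^ 2)
        + (1 / h) * (∫ ξ in (x - h / 2)..(x + h / 2), ν * iteratedDeriv 2 u ξ)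
      = ν / 24 * (fivePointCellDefect u x h / h ^ 2) := by
  rw [intervalIntegral.integral_const_mul, intervalIntegral_iteratedDeriv_two hu,
    fivePointCellDefect]
  field_simp
  ring

theorem quick_five_point_diffusion_cell_average (u : ℝ → ℝ) (hu : ContDiff ℝ 6 u)
    (x ν : ℝ) :
    (fun h : ℝ =>
        -ν * (-u (x - 2 * h) + 28 * u (x - h) - 54 * u x + 28 * u (x + h) - u (x + 2 * h))
            / (24 * h ^ 2)
        + (1 / h) * (∫ ξ in (x - h / 2)..(x + h / 2), ν * iteratedDeriv 2 u ξ))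
      =O[nhdsWithin 0 (Set.Ioi 0)] fun h : ℝ => h ^ 4 := by
  have hne : ∀ᶠ h in 𝓝[>] (0 : ℝ), h ≠ 0 := eventually_mem_nhdsWithin.mono fun h hh ↦ hh.ne'
  have hquot : (fun h ↦ fivePointCellDefect u x h / h ^ 2) =O[𝓝[>] 0] fun h ↦ h ^ 4 :=
    ((fivePointCellDefect_isBigO hu x).mono nhdsWithin_le_nhds
      |>.mul (isBigO_refl (fun h : ℝ ↦ (h ^ 2)⁻¹) _)).congr'
      (.of_forall fun h ↦ (div_eq_mul_inv _ _).symm)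
      (hne.mono fun h hh ↦ by field_simp)
  refine (hquot.const_mul_left (ν / 24)).congr' ?_ .rfl
  exact hne.mono fun h hh ↦
    (five_point_cell_average_error_eq (hu.of_le (by norm_num)) x ν hh).symm
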